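/- Let (H, ◁◁, K) be a right Hopf module of cocommutative Hopf algebras and let δ be the space of ε-co-cocycles α : H → K, i.e. Δ_K ∘ α = (η_K ε_H ⊗ α + α ⊗ η_K ε_H) ∘ Δ_H. For α, β ∈ δ define (α ◁◁* β)(f) := −α(f₍₁₎ ◁◁ β(f₍₂₎)). Then α ◁◁* β ∈ δ, and (δ, ◁◁*, [−,−]_*) is a postLie algebra, where [α,β]_* = α*β − β*α is the convolution commutator bracket. In particular (α ◁◁* β) ◁◁* γ − α ◁◁* (β ◁◁* γ) − (α ◁◁* γ) ◁◁* β + α ◁◁* (γ ◁◁* β) = α ◁◁* [β,γ]_*. -/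

import Mathlib

/-!
An `ε`-co-cocycle is the same thing as a linear map `H → K` with primitive values. Since
`α ◁◁* β = -(α ∘ Φ_β)` with `Φ_β f = f₍₁₎ ◁◁ β(f₍₂₎)`, this makes the stability of `δ` immediate.
Acting by a primitive element is a coderivation of `H`, hence so is `Φ_β` when `H` is
cocommutative. Precomposition with a coderivation is a derivation of every convolution
`μ(X f₍₁₎, Y f₍₂₎)` through a bilinear map `μ`: for the product of `K` this is the first postLie
axiom, and for the action it gives, together with `(h ◁◁ k) ◁◁ k' = h ◁◁ kk'` and
coassociativity, `Φ_β ∘ Φ_γ = Φ_{β ∘ Φ_γ} + Φ_{γ * β}`. Antisymmetrising in `β, γ` gives the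
second axiom.
-/

open TensorProduct

noncomputable def convMul {R H K : Type*} [CommRing R] [Ring H] [Ring K]
    [HopfAlgebra R H] [HopfAlgebra R K] (A B : H →ₗ[R] K) : H →ₗ[R] K :=
  (LinearMap.mul' R K) ∘ₗ (TensorProduct.map A B) ∘ₗ Coalgebra.comul

/-- `(α ◁◁* β)(f) := −α(f₍₁₎ ◁◁ β(f₍₂₎))`. -/
noncomputable def triMul {R H K : Type*} [CommRing R] [Ring H] [Ring K]
    [HopfAlgebra R H] [HopfAlgebra R K]
    (act : H →ₗ[R] K →ₗ[R] H) (A B : H →ₗ[R] K) : H →ₗ[R] K :=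
  -(A ∘ₗ (TensorProduct.lift act) ∘ₗ (TensorProduct.map LinearMap.id B) ∘ₗ Coalgebra.comul)

def IsEpsCocycle {R H K : Type*} [CommRing R] [Ring H] [Ring K]
    [HopfAlgebra R H] [HopfAlgebra R K] (A : H →ₗ[R] K) : Prop :=
  Coalgebra.comul ∘ₗ A =
    (TensorProduct.map ((Algebra.linearMap R K) ∘ₗ Coalgebra.counit) A
      + TensorProduct.map A ((Algebra.linearMap R K) ∘ₗ Coalgebra.counit))
      ∘ₗ Coalgebra.comul

open Coalgebra

noncomputable def convWith {R C M N P : Type*} [CommSemiring R] [AddCommMonoid C] [Module R C]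
    [CoalgebraStruct R C] [AddCommMonoid M] [Module R M] [AddCommMonoid N] [Module R N]
    [AddCommMonoid P] [Module R P]
    (μ : M →ₗ[R] N →ₗ[R] P) (X : C →ₗ[R] M) (Y : C →ₗ[R] N) : C →ₗ[R] P :=
  lift μ ∘ₗ map X Y ∘ₗ comul

def IsCoderivation {R C : Type*} [CommSemiring R] [AddCommMonoid C] [Module R C]
    [CoalgebraStruct R C] (D : C →ₗ[R] C) : Prop :=
  comul ∘ₗ D = (D.lTensor C + D.rTensor C) ∘ₗ comul

def IsPrimitiveElement (R : Type*) {K : Type*} [CommSemiring R] [Semiring K] [Bialgebra R K]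
    (k : K) : Prop :=
  comul (R := R) k = 1 ⊗ₜ k + k ⊗ₜ 1

section Convolution

variable {R C M N P : Type*} [CommSemiring R] [AddCommMonoid C] [Module R C]
  [AddCommMonoid M] [Module R M] [AddCommMonoid N] [Module R N] [AddCommMonoid P] [Module R P]

theorem IsCoderivation.comul_apply [CoalgebraStruct R C] {D : C →ₗ[R] C}
    (hD : IsCoderivation D) (c : C) :
    comul (D c) = D.lTensor C (comul c) + D.rTensor C (comul c) :=
  LinearMap.congr_fun hD c

theorem convWith_comp_of_isCoderivation [CoalgebraStruct R C] (μ : M →ₗ[R] N →ₗ[R] P)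
    (X : C →ₗ[R] M) (Y : C →ₗ[R] N) {D : C →ₗ[R] C} (hD : IsCoderivation D) :
    convWith μ X Y ∘ₗ D = convWith μ X (Y ∘ₗ D) + convWith μ (X ∘ₗ D) Y := by
  ext c
  simp [convWith, hD.comul_apply]

theorem convWith_assoc [Coalgebra R C] (μ : M →ₗ[R] N →ₗ[R] M) (ν : N →ₗ[R] N →ₗ[R] N)
    (h : ∀ m n n', μ (μ m n) n' = μ m (ν n n')) (X : C →ₗ[R] M) (Y Z : C →ₗ[R] N) :
    convWith μ (convWith μ X Y) Z = convWith μ X (convWith ν Y Z) := by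
  have hassoc : lift μ ∘ₗ map X (lift ν ∘ₗ map Y Z) ∘ₗ (TensorProduct.assoc R C C C).toLinearMap
      = lift μ ∘ₗ map (lift μ ∘ₗ map X Y) Z := by
    ext x y z
    simp [h]
  ext c
  calc convWith μ (convWith μ X Y) Z c
      = (lift μ ∘ₗ map (lift μ ∘ₗ map X Y) Z) (comul.rTensor C (comul c)) := by
        simp [convWith, LinearMap.comp_assoc]
    _ = (lift μ ∘ₗ map X (lift ν ∘ₗ map Y Z)) (comul.lTensor C (comul c)) := by
        rw [← hassoc, ← coassoc_apply]; rfl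
    _ = convWith μ X (convWith ν Y Z) c := by
        simp [convWith, LinearMap.comp_assoc]

end Convolution

section ConvolutionGroup

variable {R C M N P : Type*} [CommSemiring R] [AddCommGroup C] [Module R C] [CoalgebraStruct R C]
  [AddCommGroup M] [Module R M] [AddCommGroup N] [Module R N] [AddCommGroup P] [Module R P]
  (μ : M →ₗ[R] N →ₗ[R] P)

theorem convWith_neg_left (X : C →ₗ[R] M) (Y : C →ₗ[R] N) :
    convWith μ (-X) Y = -convWith μ X Y := by
  ext c
  simp [convWith, ← (ℛ R c).eq, map_sum]

theorem convWith_neg_right (X : C →ₗ[R] M) (Y : C →ₗ[R] N) :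
    convWith μ X (-Y) = -convWith μ X Y := by
  ext c
  simp [convWith, ← (ℛ R c).eq, map_sum]

theorem convWith_sub_right (X : C →ₗ[R] M) (Y Y' : C →ₗ[R] N) :
    convWith μ X (Y - Y') = convWith μ X Y - convWith μ X Y' := by
  ext c
  simp [convWith, ← (ℛ R c).eq, map_sum]

end ConvolutionGroup

section Action

variable {R H K : Type*} [CommSemiring R] [AddCommMonoid H] [Module R H] [Coalgebra R H]
  [Semiring K] [Bialgebra R K]

theorem isCoderivation_flip_of_isPrimitiveElement (act : H →ₗ[R] K →ₗ[R] H)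
    (hact_one : ∀ h : H, act h 1 = h)
    (hact_comul : ∀ (h : H) (k : K),
      Coalgebra.comul (act h k)
        = (TensorProduct.map (TensorProduct.lift act) (TensorProduct.lift act))
            ((TensorProduct.tensorTensorTensorComm R H H K K)
              (Coalgebra.comul h ⊗ₜ[R] Coalgebra.comul k)))
    {k : K} (hk : IsPrimitiveElement R k) : IsCoderivation (act.flip k) := by
  ext h
  rw [LinearMap.comp_apply, LinearMap.flip_apply, hact_comul, hk, LinearMap.comp_apply,
    LinearMap.add_apply]
  induction comul (R := R) h with
  | zero => simp
  | tmul a b => simp [tmul_add, hact_one]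
  | add x y hx hy => simp only [add_tmul, map_add, hx, hy]; abel

theorem isCoderivation_convWith_id_of_isPrimitiveElement [IsCocomm R H]
    (act : H →ₗ[R] K →ₗ[R] H)
    (hact_one : ∀ h : H, act h 1 = h)
    (hact_comul : ∀ (h : H) (k : K),
      Coalgebra.comul (act h k)
        = (TensorProduct.map (TensorProduct.lift act) (TensorProduct.lift act))
            ((TensorProduct.tensorTensorTensorComm R H H K K)
              (Coalgebra.comul h ⊗ₜ[R] Coalgebra.comul k)))
    {B : H →ₗ[R] K} (hB : ∀ g, IsPrimitiveElement R (B g)) :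
    IsCoderivation (convWith act LinearMap.id B) := by
  set T : H ⊗[R] H →ₗ[R] H := lift act ∘ₗ B.lTensor H
  -- `Δ(h ◁◁ β(g)) = h₍₁₎ ⊗ h₍₂₎ ◁◁ β(g) + h₍₁₎ ◁◁ β(g) ⊗ h₍₂₎`, written for `t = h ⊗ g`
  have hT : ∀ t : H ⊗[R] H, comul (T t)
      = T.lTensor H (TensorProduct.assoc R H H H (comul.rTensor H t))
        + T.rTensor H ((TensorProduct.assoc R H H H).symm
            ((TensorProduct.comm R H H).toLinearMap.lTensor H
              (TensorProduct.assoc R H H H (comul.rTensor H t)))) := by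
    intro t
    induction t with
    | zero => simp
    | tmul h g =>
      have hflip := (isCoderivation_flip_of_isPrimitiveElement act hact_one hact_comul
        (hB g)).comul_apply h
      rw [LinearMap.flip_apply] at hflip
      simp only [T, LinearMap.comp_apply, LinearMap.lTensor_tmul, lift.tmul, hflip,
        LinearMap.rTensor_tmul]
      induction comul (R := R) h with
      | zero => simp
      | tmul x y => simp
      | add x y hx hy =>
        rw [map_add, map_add, add_add_add_comm, hx, hy]
        simp only [add_tmul, map_add]
        abel
    | add x y hx hy => simp only [map_add, hx, hy]; abel
  ext f
  have hΦ : convWith act LinearMap.id B = T ∘ₗ comul := rfl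
  simp only [hΦ, LinearMap.comp_apply, hT, coassoc_apply, LinearMap.add_apply]
  rw [← LinearMap.lTensor_comp_apply, ← LinearMap.lTensor_comp_apply, comm_comp_comul,
    coassoc_symm_apply, ← LinearMap.rTensor_comp_apply]

end Action

theorem convWith_id_comp_convWith_id {R H K : Type*} [CommSemiring R] [AddCommMonoid H]
    [Module R H] [Coalgebra R H] [Semiring K] [Algebra R K] (act : H →ₗ[R] K →ₗ[R] H)
    (hact_comp : ∀ (h : H) (k k' : K), act (act h k) k' = act h (k * k'))
    (B : H →ₗ[R] K) {C : H →ₗ[R] K} (hC : IsCoderivation (convWith act LinearMap.id C)) :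
    convWith act LinearMap.id B ∘ₗ convWith act LinearMap.id C
      = convWith act LinearMap.id (B ∘ₗ convWith act LinearMap.id C)
        + convWith act LinearMap.id (convWith (LinearMap.mul R K) C B) := by
  rw [convWith_comp_of_isCoderivation _ _ _ hC, LinearMap.id_comp,
    convWith_assoc act (LinearMap.mul R K) hact_comp]

section Cocycle

variable {R H K : Type*} [CommRing R] [Ring H] [Ring K] [HopfAlgebra R H] [HopfAlgebra R K]

theorem isEpsCocycle_iff (A : H →ₗ[R] K) :
    IsEpsCocycle A ↔ ∀ g, IsPrimitiveElement R (A g) := by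
  have hl : ∀ g, map (Algebra.linearMap R K ∘ₗ counit) A (comul g) = 1 ⊗ₜ A g := fun g => by
    rw [← LinearMap.map_rTensor, rTensor_counit_comul]; simp
  have hr : ∀ g, map A (Algebra.linearMap R K ∘ₗ counit) (comul g) = A g ⊗ₜ 1 := fun g => by
    rw [← LinearMap.map_lTensor, lTensor_counit_comul]; simp
  simp only [IsEpsCocycle, IsPrimitiveElement, LinearMap.ext_iff, LinearMap.comp_apply,
    LinearMap.add_apply, hl, hr]

theorem IsEpsCocycle.neg_comp {A : H →ₗ[R] K} (hA : IsEpsCocycle A) (D : H →ₗ[R] H) :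
    IsEpsCocycle (-(A ∘ₗ D)) := by
  rw [isEpsCocycle_iff] at hA ⊢
  intro g
  have hDg := hA (D g)
  rw [IsPrimitiveElement] at hDg ⊢
  simp only [LinearMap.neg_apply, LinearMap.comp_apply, map_neg, hDg, tmul_neg, neg_tmul, neg_add]

end Cocycle

theorem eps_cocycles_postLie_general
    {R H K : Type*} [CommRing R] [Ring H] [Ring K]
    [HopfAlgebra R H] [HopfAlgebra R K]
    (hcoH : ∀ x : H, (TensorProduct.comm R H H) (Coalgebra.comul x) = Coalgebra.comul x)
    (act : H →ₗ[R] K →ₗ[R] H)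
    (hact_one : ∀ h : H, act h 1 = h)
    (hact_comp : ∀ (h : H) (k k' : K), act (act h k) k' = act h (k * k'))
    (hact_comul : ∀ (h : H) (k : K),
      Coalgebra.comul (act h k)
        = (TensorProduct.map (TensorProduct.lift act) (TensorProduct.lift act))
            ((TensorProduct.tensorTensorTensorComm R H H K K)
              (Coalgebra.comul h ⊗ₜ[R] Coalgebra.comul k))) :
    -- `δ` is stable under `◁◁*`
    (∀ A B : H →ₗ[R] K, IsEpsCocycle A → IsEpsCocycle B → IsEpsCocycle (triMul act A B)) ∧
    -- first postLie axiom: `[α,β]_* ◁◁* γ = [α ◁◁* γ, β]_* + [α, β ◁◁* γ]_*`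
    (∀ A B C : H →ₗ[R] K, IsEpsCocycle A → IsEpsCocycle B → IsEpsCocycle C →
      triMul act (convMul A B - convMul B A) C
        = (convMul (triMul act A C) B - convMul B (triMul act A C))
          + (convMul A (triMul act B C) - convMul (triMul act B C) A)) ∧
    -- second postLie axiom:
    -- `(α◁◁*β)◁◁*γ − α◁◁*(β◁◁*γ) − (α◁◁*γ)◁◁*β + α◁◁*(γ◁◁*β) = α ◁◁* [β,γ]_*`
    (∀ A B C : H →ₗ[R] K, IsEpsCocycle A → IsEpsCocycle B → IsEpsCocycle C →
      triMul act (triMul act A B) C - triMul act A (triMul act B C)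
        - triMul act (triMul act A C) B + triMul act A (triMul act C B)
        = triMul act A (convMul B C - convMul C B)) := by
  have : IsCocomm R H := ⟨LinearMap.ext hcoH⟩
  have hΦ : ∀ {B : H →ₗ[R] K}, IsEpsCocycle B → IsCoderivation (convWith act LinearMap.id B) :=
    fun hB => isCoderivation_convWith_id_of_isPrimitiveElement act hact_one hact_comul
      ((isEpsCocycle_iff _).1 hB)
  have htri : ∀ A B : H →ₗ[R] K, triMul act A B = -(A ∘ₗ convWith act LinearMap.id B) :=
    fun _ _ => rfl
  have hconv : ∀ X Y : H →ₗ[R] K, convMul X Y = convWith (LinearMap.mul R K) X Y := fun _ _ => rfl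
  refine ⟨fun A B hA _ => ?_, fun A B C _ _ hC => ?_, fun A B C _ hB hC => ?_⟩
  · rw [htri]
    exact hA.neg_comp _
  · simp only [htri, hconv, LinearMap.sub_comp,
      convWith_comp_of_isCoderivation _ _ _ (hΦ hC), convWith_neg_left, convWith_neg_right]
    abel
  · simp only [htri, hconv, convWith_neg_right, convWith_sub_right, LinearMap.neg_comp,
      LinearMap.comp_neg, neg_neg, LinearMap.comp_sub, LinearMap.comp_assoc,
      convWith_id_comp_convWith_id act hact_comp _ (hΦ hB),
      convWith_id_comp_convWith_id act hact_comp _ (hΦ hC), LinearMap.comp_add]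
    abel

/-- For a right Hopf module `(H, ◁◁, K)` of cocommutative Hopf algebras,
the space `δ` of `ε`-co-cocycles is stable under `◁◁*`, and `(δ, ◁◁*, [−,−]_*)` is a
postLie algebra for the convolution commutator bracket. -/
theorem eps_cocycles_postLie
    {R H K : Type*} [CommRing R] [Ring H] [Ring K]
    [HopfAlgebra R H] [HopfAlgebra R K]
    (hcoH : ∀ x : H, (TensorProduct.comm R H H) (Coalgebra.comul x) = Coalgebra.comul x)
    (hcoK : ∀ x : K, (TensorProduct.comm R K K) (Coalgebra.comul x) = Coalgebra.comul x)
    (act : H →ₗ[R] K →ₗ[R] H)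
    (hact_one : ∀ h : H, act h 1 = h)
    (hone_act : ∀ k : K, act 1 k = Coalgebra.counit (R := R) k • (1 : H))
    (hact_mul : ∀ (h₁ h₂ : H) (k : K),
      act (h₁ * h₂) k
        = (LinearMap.mul' R H) ((TensorProduct.map (act h₁) (act h₂)) (Coalgebra.comul k)))
    (hact_comp : ∀ (h : H) (k k' : K), act (act h k) k' = act h (k * k'))
    (hact_comul : ∀ (h : H) (k : K),
      Coalgebra.comul (act h k)
        = (TensorProduct.map (TensorProduct.lift act) (TensorProduct.lift act))
            ((TensorProduct.tensorTensorTensorComm R H H K K)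
              (Coalgebra.comul h ⊗ₜ[R] Coalgebra.comul k)))
    (hact_antipode : ∀ (h : H) (k : K),
      HopfAlgebra.antipode (R := R) (act h k) = act (HopfAlgebra.antipode (R := R) h) k) :
    -- `δ` is stable under `◁◁*`
    (∀ A B : H →ₗ[R] K, IsEpsCocycle A → IsEpsCocycle B → IsEpsCocycle (triMul act A B)) ∧
    -- first postLie axiom: `[α,β]_* ◁◁* γ = [α ◁◁* γ, β]_* + [α, β ◁◁* γ]_*`
    (∀ A B C : H →ₗ[R] K, IsEpsCocycle A → IsEpsCocycle B → IsEpsCocycle C →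
      triMul act (convMul A B - convMul B A) C
        = (convMul (triMul act A C) B - convMul B (triMul act A C))
          + (convMul A (triMul act B C) - convMul (triMul act B C) A)) ∧
    -- second postLie axiom:
    -- `(α◁◁*β)◁◁*γ − α◁◁*(β◁◁*γ) − (α◁◁*γ)◁◁*β + α◁◁*(γ◁◁*β) = α ◁◁* [β,γ]_*`
    (∀ A B C : H →ₗ[R] K, IsEpsCocycle A → IsEpsCocycle B → IsEpsCocycle C →
      triMul act (triMul act A B) C - triMul act A (triMul act B C)
        - triMul act (triMul act A C) B + triMul act A (triMul act C B)
        = triMul act A (convMul B C - convMul C B)) :=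
  eps_cocycles_postLie_general hcoH act hact_one hact_comp hact_comul
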